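/- Let J be a nonnegative random variable on a probability space (M, μ) such that lim_{t→∞} t² μ(J ≥ t) = c for some constant c > 0. Then lim_{t→∞} E(J² · 1_{J < t}) / ln t = 2c. -/

import Mathlib

/-!
By the layer-cake formula, for `t ≥ 0`,
`E(J² 1_{J<t}) = ∫₀^{t²} μ(J ≥ √s) ds - t² μ(J ≥ t)`.
The boundary term is bounded, hence `o(log t)`. In the bulk term the integrand `h(s) = μ(J ≥ √s)`
satisfies `s h(s) → c`, i.e. `h(s) ≈ c / s`, so `∫₀^T h ~ c log T`; with `T = t²` this is
`2c log t`.
-/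

open MeasureTheory Filter Asymptotics Topology

theorem abs_intervalIntegral_sub_mul_log_div_le {h : ℝ → ℝ} {L δ S T : ℝ} (hS : 0 < S)
    (hST : S ≤ T) (hint : IntervalIntegrable h volume S T)
    (hclose : ∀ s ∈ Set.Icc S T, |s * h s - L| ≤ δ) :
    |(∫ s in S..T, h s) - L * Real.log (T / S)| ≤ δ * Real.log (T / S) := by
  have hinv : IntervalIntegrable (fun s : ℝ => s⁻¹) volume S T :=
    (continuousOn_inv₀.mono fun s hs =>
      (hS.trans_le (Set.uIcc_of_le hST ▸ hs).1).ne').intervalIntegrable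
  have hlog := integral_inv_of_pos hS (hS.trans_le hST)
  calc |(∫ s in S..T, h s) - L * Real.log (T / S)|
      = ‖∫ s in S..T, (s * h s - L) * s⁻¹‖ := by
        rw [Real.norm_eq_abs, ← hlog, ← intervalIntegral.integral_const_mul,
          ← intervalIntegral.integral_sub hint (hinv.const_mul L)]
        congr 1
        refine intervalIntegral.integral_congr fun s hs => ?_
        have : s ≠ 0 := (hS.trans_le (Set.uIcc_of_le hST ▸ hs).1).ne'
        field_simp
    _ ≤ ∫ s in S..T, δ * s⁻¹ := by
        refine intervalIntegral.norm_integral_le_of_norm_le hST (ae_of_all _ fun s hs => ?_)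
          (hinv.const_mul δ)
        have hs0 : 0 < s := hS.trans hs.1
        rw [norm_mul, norm_inv, Real.norm_of_nonneg hs0.le]
        exact mul_le_mul_of_nonneg_right (hclose s ⟨hs.1.le, hs.2⟩) (inv_nonneg.2 hs0.le)
    _ = δ * Real.log (T / S) := by rw [intervalIntegral.integral_const_mul, hlog]

theorem tendsto_intervalIntegral_div_log {h : ℝ → ℝ} {L : ℝ}
    (hint : ∀ T, IntervalIntegrable h volume 0 T) (hlim : Tendsto (fun s => s * h s) atTop (𝓝 L)) :
    Tendsto (fun T => (∫ s in 0..T, h s) / Real.log T) atTop (𝓝 L) := by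
  set F : ℝ → ℝ := fun T => (∫ s in 0..T, h s) - L * Real.log T
  have hF : F =o[atTop] Real.log := by
    refine isLittleO_iff.2 fun ε hε => ?_
    obtain ⟨S, hS⟩ := eventually_atTop.1 <| (eventually_ge_atTop 1).and <|
      hlim.eventually (Metric.closedBall_mem_nhds L (half_pos hε))
    have hS1 : 1 ≤ S := (hS S le_rfl).1
    filter_upwards [eventually_ge_atTop S,
      Real.tendsto_log_atTop.eventually_ge_atTop (2 * |F S| / ε)] with T hST hlogT
    have hlogTS : Real.log (T / S) = Real.log T - Real.log S :=
      Real.log_div (by linarith) (by linarith)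
    have hstep : |F T - F S| ≤ ε / 2 * Real.log (T / S) := by
      convert abs_intervalIntegral_sub_mul_log_div_le (by linarith) hST
        ((hint S).symm.trans (hint T)) fun s hs => (hS s hs.1).2 using 2
      rw [← intervalIntegral.integral_interval_sub_left (hint T) (hint S), hlogTS]
      ring
    have hFS : |F S| ≤ ε / 2 * Real.log T := by
      rw [div_le_iff₀ hε] at hlogT
      linarith
    have hlog_le : ε / 2 * Real.log (T / S) ≤ ε / 2 * Real.log T :=
      mul_le_mul_of_nonneg_left (by linarith [Real.log_nonneg hS1]) (by positivity)
    rw [Real.norm_eq_abs, Real.norm_of_nonneg (Real.log_nonneg (by linarith))]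
    linarith [abs_sub_abs_le_abs_sub (F T) (F S)]
  have hsum := (tendsto_const_nhds (x := L)).add hF.tendsto_div_nhds_zero
  rw [add_zero] at hsum
  refine hsum.congr' ?_
  filter_upwards [eventually_gt_atTop 1] with T hT
  have := (Real.log_pos hT).ne'
  field_simp
  ring

theorem tendsto_intervalIntegral_sq_div_log {h : ℝ → ℝ} {L : ℝ}
    (hint : ∀ T, IntervalIntegrable h volume 0 T) (hlim : Tendsto (fun s => s * h s) atTop (𝓝 L)) :
    Tendsto (fun t => (∫ s in 0..t ^ 2, h s) / Real.log t) atTop (𝓝 (2 * L)) := by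
  refine (((tendsto_intervalIntegral_div_log hint hlim).comp
    (tendsto_pow_atTop two_ne_zero)).const_mul 2).congr' ?_
  filter_upwards [eventually_gt_atTop 1] with t ht
  have := (Real.log_pos ht).ne'
  simp only [Function.comp_apply, Real.log_pow, Nat.cast_ofNat]
  field_simp

theorem setOf_le_indicator_lt_sq {Ω : Type*} {X : Ω → ℝ} (hX : ∀ ω, 0 ≤ X ω) {s : ℝ}
    (hs : 0 < s) (t : ℝ) :
    {ω | s ≤ {ω | X ω < t}.indicator (fun ω => X ω ^ 2) ω} =
      {ω | √s ≤ X ω} \ {ω | t ≤ X ω} := by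
  ext ω
  by_cases hω : X ω < t <;> simp [hω, hs, Real.sqrt_le_left (hX ω)]

section

variable {Ω : Type*} [MeasurableSpace Ω] (μ : Measure Ω) [IsFiniteMeasure μ] {X : Ω → ℝ}

theorem intervalIntegrable_measureReal_sqrt_le (a b : ℝ) :
    IntervalIntegrable (fun s => μ.real {ω | √s ≤ X ω}) volume a b :=
  Antitone.intervalIntegrable fun _ _ hab =>
    measureReal_mono fun _ hω => (Real.sqrt_le_sqrt hab).trans hω

theorem integral_indicator_lt_sq (hX : ∀ ω, 0 ≤ X ω) (hXm : Measurable X) {t : ℝ} (ht : 0 ≤ t) :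
    ∫ ω, {ω | X ω < t}.indicator (fun ω => X ω ^ 2) ω ∂μ =
      (∫ s in 0..t ^ 2, μ.real {ω | √s ≤ X ω}) - t ^ 2 * μ.real {ω | t ≤ X ω} := by
  set f : Ω → ℝ := {ω | X ω < t}.indicator (fun ω => X ω ^ 2)
  have hf_nn : ∀ ω, 0 ≤ f ω := Set.indicator_nonneg fun ω _ => sq_nonneg (X ω)
  have hf_le : ∀ ω, f ω ≤ t ^ 2 := Set.indicator_le'
    (fun ω hω => pow_le_pow_left₀ (hX ω) (le_of_lt hω) 2) fun _ _ => by positivity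
  have hf_int : Integrable f μ :=
    .of_bound ((hXm.pow_const 2).indicator
        (measurableSet_lt hXm measurable_const)).aestronglyMeasurable (t ^ 2)
      (ae_of_all _ fun ω => by rw [Real.norm_of_nonneg (hf_nn ω)]; exact hf_le ω)
  have htail_sub : ∀ s ∈ Set.Ioc 0 (t ^ 2), {ω | t ≤ X ω} ⊆ {ω | √s ≤ X ω} :=
    fun s hs ω hω => ((Real.sqrt_le_left ht).2 hs.2).trans hω
  rw [hf_int.integral_eq_integral_Ioc_meas_le (ae_of_all _ hf_nn) (ae_of_all _ hf_le),
    setIntegral_congr_fun measurableSet_Ioc fun s hs => by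
      rw [setOf_le_indicator_lt_sq hX hs.1 t,
        measureReal_sdiff (htail_sub s hs) (measurableSet_le measurable_const hXm)],
    integral_sub ((intervalIntegrable_iff_integrableOn_Ioc_of_le (sq_nonneg t)).1
        (intervalIntegrable_measureReal_sqrt_le μ 0 (t ^ 2)))
      (integrableOn_const measure_Ioc_lt_top.ne),
    setIntegral_const, Real.volume_real_Ioc_of_le (sq_nonneg t), sub_zero, smul_eq_mul,
    intervalIntegral.integral_of_le (sq_nonneg t)]

end

theorem stmt5_general {Ω : Type*} [MeasurableSpace Ω] (μ : Measure Ω) [IsProbabilityMeasure μ]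
    (J : Ω → ℝ) (hnn : ∀ ω, 0 ≤ J ω) (hmeas : Measurable J)
    (c : ℝ)
    (htail : Tendsto (fun t : ℝ => t ^ 2 * (μ {ω | t ≤ J ω}).toReal) atTop (nhds c)) :
    Tendsto (fun t : ℝ =>
        (∫ ω, Set.indicator {ω | J ω < t} (fun ω => (J ω) ^ 2) ω ∂μ) / Real.log t)
      atTop (nhds (2 * c)) := by
  have htail_sqrt : Tendsto (fun s => s * μ.real {ω | √s ≤ J ω}) atTop (𝓝 c) :=
    (htail.comp Real.tendsto_sqrt_atTop).congr' <| by
      filter_upwards [eventually_ge_atTop 0] with s hs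
      simp [Real.sq_sqrt hs, measureReal_def]
  have hbulk := tendsto_intervalIntegral_sq_div_log
    (intervalIntegrable_measureReal_sqrt_le μ 0) htail_sqrt
  have hboundary : Tendsto (fun t => t ^ 2 * μ.real {ω | t ≤ J ω} / Real.log t) atTop (𝓝 0) := by
    simpa [div_eq_mul_inv, measureReal_def] using
      htail.mul (tendsto_inv_atTop_zero.comp Real.tendsto_log_atTop)
  have hdiff := hbulk.sub hboundary
  rw [sub_zero] at hdiff
  refine hdiff.congr' ?_
  filter_upwards [eventually_ge_atTop 0] with t ht
  rw [integral_indicator_lt_sq μ hnn hmeas ht, sub_div]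

theorem stmt5 {Ω : Type*} [MeasurableSpace Ω] (μ : Measure Ω) [IsProbabilityMeasure μ]
    (J : Ω → ℝ) (hnn : ∀ ω, 0 ≤ J ω) (hmeas : Measurable J)
    (c : ℝ) (hc : 0 < c)
    (htail : Tendsto (fun t : ℝ => t ^ 2 * (μ {ω | t ≤ J ω}).toReal) atTop (nhds c)) :
    Tendsto (fun t : ℝ =>
        (∫ ω, Set.indicator {ω | J ω < t} (fun ω => (J ω) ^ 2) ω ∂μ) / Real.log t)
      atTop (nhds (2 * c)) :=
  stmt5_general μ J hnn hmeas c htail
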